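/- arXiv:1705.06999 — 2 statements merged into one kernel-verified Lean document; each statement's English description precedes it below -/
import Mathlib

section
/- Let v : Ω → ℝ be smooth. Then v satisfies v₂₄ − v₁₃ + v₄·v₁₁ − v₁·v₁₄ = 0 identically on Ω if and only if for every λ ∈ ℝ the vector fields X = ∂₂ − (v₁ + λ)·∂₁ and Y = ∂₃ − v₄·∂₁ − λ·∂₄ on Ω commute: [X, Y] = 0. -/
/-!
Only the `∂₁`-component of `[X, Y]` can be nonzero. Expanding it, the terms in `λ` are
`λ (v₁₄ − v₄₁)`, which vanish by the symmetry of second derivatives, and what is left is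
`−(v₂₄ − v₁₃ + v₄v₁₁ − v₁v₁₄)`. So `[X, Y] = 0` for one (equivalently, every) `λ` exactly
when the equation holds.
-/

/-- Partial derivative of `F : ℝ⁴ → ℝ` in the `i`-th coordinate direction. -/
noncomputable def pd (i : Fin 4) (F : (Fin 4 → ℝ) → ℝ) : (Fin 4 → ℝ) → ℝ :=
  fun x => fderiv ℝ F x (Pi.single i 1)

/-- Lie bracket of two vector fields on ℝ⁴, given by their component functions:
`[X, Y]ⁱ = Σⱼ (Xʲ ∂ⱼYⁱ − Yʲ ∂ⱼXⁱ)`. -/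
noncomputable def lieB (X Y : (Fin 4 → ℝ) → (Fin 4 → ℝ)) : (Fin 4 → ℝ) → (Fin 4 → ℝ) :=
  fun x i => ∑ j : Fin 4, (X x j * pd j (fun y => Y y i) x - Y x j * pd j (fun y => X y i) x)

section LaxPair

variable {v : (Fin 4 → ℝ) → ℝ} {x : Fin 4 → ℝ}

@[simp]
lemma pd_const (j : Fin 4) (c : ℝ) : pd j (fun _ => c) x = 0 := by
  simp [pd]

@[simp]
lemma pd_neg (j : Fin 4) (f : (Fin 4 → ℝ) → ℝ) : pd j (fun y => -f y) x = -pd j f x := by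
  simp [pd]

@[simp]
lemma pd_add_const (j : Fin 4) (f : (Fin 4 → ℝ) → ℝ) (c : ℝ) :
    pd j (fun y => f y + c) x = pd j f x := by
  simp [pd]

lemma pd_pd_eq_fderiv_fderiv (hv : ContDiffAt ℝ 2 v x) (i j : Fin 4) :
    pd i (pd j v) x = fderiv ℝ (fderiv ℝ v) x (Pi.single i 1) (Pi.single j 1) := by
  have hd : DifferentiableAt ℝ (fderiv ℝ v) x :=
    (hv.fderiv_right (m := 1) (by norm_num)).differentiableAt (by norm_num)
  change fderiv ℝ (fun y => fderiv ℝ v y (Pi.single j 1)) x (Pi.single i 1) = _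
  rw [fderiv_clm_apply hd (differentiableAt_const _)]
  simp

lemma pd_comm (hv : ContDiffAt ℝ 2 v x) (i j : Fin 4) :
    pd i (pd j v) x = pd j (pd i v) x := by
  rw [pd_pd_eq_fderiv_fderiv hv, pd_pd_eq_fderiv_fderiv hv]
  exact (hv.isSymmSndFDerivAt (by simp [minSmoothness_of_isRCLikeNormedField])).eq _ _

/-- `v₂₄ − v₁₃ + v₄v₁₁ − v₁v₁₄`, with the coordinates `x¹,…,x⁴` indexed by `0,…,3`. -/
noncomputable def segre4 (v : (Fin 4 → ℝ) → ℝ) (x : Fin 4 → ℝ) : ℝ :=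
  pd 3 (pd 1 v) x - pd 2 (pd 0 v) x + pd 3 v x * pd 0 (pd 0 v) x - pd 0 v x * pd 3 (pd 0 v) x

lemma lieB_laxPair (hv : ContDiffAt ℝ 2 v x) (lam : ℝ) :
    lieB (fun y => ![-(pd 0 v y + lam), 1, 0, 0]) (fun y => ![-(pd 3 v y), 0, 1, -lam]) x
      = ![-segre4 v x, 0, 0, 0] := by
  funext i
  fin_cases i <;>
    simp only [lieB, Fin.sum_univ_four, Fin.reduceFinMk, Fin.isValue, Fin.zero_eta, Fin.mk_one,
      Matrix.cons_val, pd_neg, pd_add_const, pd_const]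
  · rw [segre4, pd_comm hv 0 3, pd_comm hv 1 3]
    ring
  all_goals ring

lemma lieB_laxPair_eq_zero_iff (hv : ContDiffAt ℝ 2 v x) (lam : ℝ) :
    lieB (fun y => ![-(pd 0 v y + lam), 1, 0, 0]) (fun y => ![-(pd 3 v y), 0, 1, -lam]) x = 0 ↔
      segre4 v x = 0 := by
  rw [lieB_laxPair hv]
  simp [funext_iff, Fin.forall_fin_succ]

end LaxPair

/-- `v` satisfies `v₂₄ − v₁₃ + v₄v₁₁ − v₁v₁₄ = 0` on `Ω` iff for every `λ` the vector fields
`X = ∂₂ − (v₁ + λ)∂₁` and `Y = ∂₃ − v₄∂₁ − λ∂₄` commute on `Ω`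
(dispersionless Lax pair of the Segre type [4] system).
Coordinates `x¹,…,x⁴` are indexed by `0,…,3`. -/
theorem statement8 (Ω : Set (Fin 4 → ℝ)) (hΩ : IsOpen Ω)
    (v : (Fin 4 → ℝ) → ℝ) (hv : ContDiffOn ℝ (⊤ : ℕ∞) v Ω) :
    (∀ x ∈ Ω,
        pd 3 (pd 1 v) x - pd 2 (pd 0 v) x
          + pd 3 v x * pd 0 (pd 0 v) x - pd 0 v x * pd 3 (pd 0 v) x = 0) ↔
    (∀ lam : ℝ, ∀ x ∈ Ω,
        lieB (fun y => ![-(pd 0 v y + lam), 1, 0, 0])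
             (fun y => ![-(pd 3 v y), 0, 1, -lam]) x = 0) := by
  have hv2 : ∀ x ∈ Ω, ContDiffAt ℝ 2 v x := fun x hx =>
    (hv.contDiffAt (hΩ.mem_nhds hx)).of_le (WithTop.coe_le_coe.mpr le_top)
  constructor
  · exact fun h lam x hx => (lieB_laxPair_eq_zero_iff (hv2 x hx) lam).2 (h x hx)
  · exact fun h x hx => (lieB_laxPair_eq_zero_iff (hv2 x hx) 0).1 (h 0 x hx)
end

section
/- Let u, v : Ω → ℝ be smooth, and suppose u₂ and v₂ − v₁ vanish nowhere on Ω. If u₃·(v₂ − v₁) = u₂·(v₃ − v₂) and u₄·(v₂ − v₁) = u₂·(v₄ − v₃) hold identically on Ω, then the functions m := (v₃ − v₂)/(v₂ − v₁) and n := (v₄ − v₃)/(v₂ − v₁) satisfy m₄ − n₃ + m·n₂ − n·m₂ = 0 on Ω. -/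
/-! On `Ω` the relations say exactly that `m = u₃/u₂` and `n = u₄/u₂`, i.e. that the vector fields
`∂₃ - m ∂₂` and `∂₄ - n ∂₂` both annihilate `u`. For quotients of partial derivatives of a single
`C²` function, `m₄ - n₃ + m n₂ - n m₂` vanishes identically by the symmetry of second derivatives:
the expression is the `∂₂`-coefficient of the commutator of these two fields.
(Indices here are the paper's; in Lean `∂ᵢ` is `pd (i - 1)`.) -/

lemma Filter.EventuallyEq.pd_eq {F G : (Fin 4 → ℝ) → ℝ} {x : Fin 4 → ℝ}
    (h : F =ᶠ[nhds x] G) (i : Fin 4) : pd i F x = pd i G x := by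
  rw [pd, pd, h.fderiv_eq]

lemma pd_div (i : Fin 4) {f g : (Fin 4 → ℝ) → ℝ} {x : Fin 4 → ℝ} (hf : DifferentiableAt ℝ f x)
    (hg : DifferentiableAt ℝ g x) (hx : g x ≠ 0) :
    pd i (fun y => f y / g y) x = (pd i f x * g x - f x * pd i g x) / g x ^ 2 := by
  have hinv : fderiv ℝ (fun y => (g y)⁻¹) x = (fderiv ℝ (fun t : ℝ => t⁻¹) (g x)).comp
      (fderiv ℝ g x) := fderiv_comp x (differentiableAt_inv hx) hg
  simp only [pd, div_eq_mul_inv]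
  rw [fderiv_fun_mul (d := fun y => (g y)⁻¹) hf (hg.inv hx), hinv, fderiv_inv]
  simp only [add_apply, smul_apply,
    ContinuousLinearMap.comp_apply, ContinuousLinearMap.toSpanSingleton_apply, smul_eq_mul]
  field_simp
  ring

lemma ContDiffAt.differentiableAt_pd {u : (Fin 4 → ℝ) → ℝ} {x : Fin 4 → ℝ}
    (hu : ContDiffAt ℝ 2 u x) (j : Fin 4) : DifferentiableAt ℝ (pd j u) x :=
  ((hu.fderiv_right (m := 1) le_rfl).clm_apply contDiffAt_const).differentiableAt one_ne_zero

lemma pd_pd_comm {u : (Fin 4 → ℝ) → ℝ} {x : Fin 4 → ℝ} (hu : ContDiffAt ℝ 2 u x) (i j : Fin 4) :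
    pd i (pd j u) x = pd j (pd i u) x := by
  have hdu : DifferentiableAt ℝ (fderiv ℝ u) x :=
    (hu.fderiv_right (m := 1) le_rfl).differentiableAt one_ne_zero
  have second : ∀ k l : Fin 4,
      pd k (pd l u) x = fderiv ℝ (fderiv ℝ u) x (Pi.single k 1) (Pi.single l 1) := by
    intro k l
    change fderiv ℝ (fun y => fderiv ℝ u y (Pi.single l 1)) x (Pi.single k 1) = _
    rw [fderiv_clm_apply hdu (differentiableAt_const _)]
    simp
  rw [second, second, hu.isSymmSndFDerivAt (by simp)]

theorem pd_quotients_zero_curvature {u : (Fin 4 → ℝ) → ℝ} {x : Fin 4 → ℝ}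
    (hu : ContDiffAt ℝ 2 u x) (j k l : Fin 4) (hj : pd j u x ≠ 0) :
    pd l (fun y => pd k u y / pd j u y) x - pd k (fun y => pd l u y / pd j u y) x
      + pd k u x / pd j u x * pd j (fun y => pd l u y / pd j u y) x
      - pd l u x / pd j u x * pd j (fun y => pd k u y / pd j u y) x = 0 := by
  simp only [pd_div _ (hu.differentiableAt_pd _) (hu.differentiableAt_pd _) hj]
  rw [pd_pd_comm hu l j, pd_pd_comm hu l k, pd_pd_comm hu k j]
  field_simp
  ring

theorem statement14_general (Ω : Set (Fin 4 → ℝ)) (hΩ : IsOpen Ω)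
    (u v : (Fin 4 → ℝ) → ℝ)
    (hu : ContDiffOn ℝ (⊤ : ℕ∞) u Ω)
    (hu2 : ∀ x ∈ Ω, pd 1 u x ≠ 0)
    (hv21 : ∀ x ∈ Ω, pd 1 v x - pd 0 v x ≠ 0)
    (heq1 : ∀ x ∈ Ω,
      pd 2 u x * (pd 1 v x - pd 0 v x) = pd 1 u x * (pd 2 v x - pd 1 v x))
    (heq2 : ∀ x ∈ Ω,
      pd 3 u x * (pd 1 v x - pd 0 v x) = pd 1 u x * (pd 3 v x - pd 2 v x)) :
    ∀ x ∈ Ω,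
      pd 3 (fun y => (pd 2 v y - pd 1 v y) / (pd 1 v y - pd 0 v y)) x
        - pd 2 (fun y => (pd 3 v y - pd 2 v y) / (pd 1 v y - pd 0 v y)) x
        + ((pd 2 v x - pd 1 v x) / (pd 1 v x - pd 0 v x))
            * pd 1 (fun y => (pd 3 v y - pd 2 v y) / (pd 1 v y - pd 0 v y)) x
        - ((pd 3 v x - pd 2 v x) / (pd 1 v x - pd 0 v x))
            * pd 1 (fun y => (pd 2 v y - pd 1 v y) / (pd 1 v y - pd 0 v y)) x = 0 := by
  intro x hx
  have hm : ∀ y ∈ Ω, (pd 2 v y - pd 1 v y) / (pd 1 v y - pd 0 v y) = pd 2 u y / pd 1 u y :=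
    fun y hy => by rw [div_eq_div_iff (hv21 y hy) (hu2 y hy)]; linarith [heq1 y hy]
  have hn : ∀ y ∈ Ω, (pd 3 v y - pd 2 v y) / (pd 1 v y - pd 0 v y) = pd 3 u y / pd 1 u y :=
    fun y hy => by rw [div_eq_div_iff (hv21 y hy) (hu2 y hy)]; linarith [heq2 y hy]
  have hΩx : Ω ∈ nhds x := hΩ.mem_nhds hx
  simp only [(Filter.eventuallyEq_of_mem hΩx hm).pd_eq, (Filter.eventuallyEq_of_mem hΩx hn).pd_eq,
    hm x hx, hn x hx]
  exact pd_quotients_zero_curvature ((hu.contDiffAt hΩx).of_le (by norm_cast))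
    1 2 3 (hu2 x hx)

/-- For the Segre type [11] system `u₃(v₂ − v₁) = u₂(v₃ − v₂)`, `u₄(v₂ − v₁) = u₂(v₄ − v₃)`
with a 5×4 Kronecker block, the functions `m = (v₃ − v₂)/(v₂ − v₁)`,
`n = (v₄ − v₃)/(v₂ − v₁)` satisfy `m₄ − n₃ + mn₂ − nm₂ = 0`.
Coordinates `x¹,…,x⁴` are indexed by `0,…,3`. -/
theorem statement14 (Ω : Set (Fin 4 → ℝ)) (hΩ : IsOpen Ω)
    (u v : (Fin 4 → ℝ) → ℝ)
    (hu : ContDiffOn ℝ (⊤ : ℕ∞) u Ω) (hv : ContDiffOn ℝ (⊤ : ℕ∞) v Ω)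
    (hu2 : ∀ x ∈ Ω, pd 1 u x ≠ 0)
    (hv21 : ∀ x ∈ Ω, pd 1 v x - pd 0 v x ≠ 0)
    (heq1 : ∀ x ∈ Ω,
      pd 2 u x * (pd 1 v x - pd 0 v x) = pd 1 u x * (pd 2 v x - pd 1 v x))
    (heq2 : ∀ x ∈ Ω,
      pd 3 u x * (pd 1 v x - pd 0 v x) = pd 1 u x * (pd 3 v x - pd 2 v x)) :
    ∀ x ∈ Ω,
      pd 3 (fun y => (pd 2 v y - pd 1 v y) / (pd 1 v y - pd 0 v y)) x
        - pd 2 (fun y => (pd 3 v y - pd 2 v y) / (pd 1 v y - pd 0 v y)) x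
        + ((pd 2 v x - pd 1 v x) / (pd 1 v x - pd 0 v x))
            * pd 1 (fun y => (pd 3 v y - pd 2 v y) / (pd 1 v y - pd 0 v y)) x
        - ((pd 3 v x - pd 2 v x) / (pd 1 v x - pd 0 v x))
            * pd 1 (fun y => (pd 2 v y - pd 1 v y) / (pd 1 v y - pd 0 v y)) x = 0 :=
  statement14_general Ω hΩ u v hu hu2 hv21 heq1 heq2
end
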